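/- Let 𝔊 ⊆ GL(n,ℂ) be a finite subgroup acting on S = ℂ[X₁,…,Xₙ] by g·f = f ∘ g⁻¹, let m_S = ⟨X₁,…,Xₙ⟩ and let n_𝔊 be the ideal generated by the 𝔊-invariant polynomials with zero constant term. Let I be an ideal with n_𝔊 ⊆ I ⊆ m_S, and let W ⊆ S be a finite-dimensional 𝔊-stable ℂ-subspace such that I = W·S + n_𝔊, which is minimal in the sense that no proper 𝔊-stable subspace W' ⊊ W satisfies I = W'·S + n_𝔊. Then the ℂ-linear map W → I/(m_S·I + n_𝔊) obtained by composing the inclusion W ⊆ I with the quotient map is a 𝔊-equivariant isomorphism. -/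

import Mathlib

open MvPolynomial

/-- The action of `g ∈ GL(n,ℂ)` on polynomials by `g · f = f ∘ g⁻¹`. -/
noncomputable def actGL {n : ℕ} (g : GL (Fin n) ℂ) :
    MvPolynomial (Fin n) ℂ →ₐ[ℂ] MvPolynomial (Fin n) ℂ :=
  aeval fun i => ∑ j, ((g⁻¹ : GL (Fin n) ℂ) : Matrix (Fin n) (Fin n) ℂ) i j • X j

/-- The ideal `n_𝔊` generated by the `𝔊`-invariant polynomials with zero constant term. -/
noncomputable def invIdeal {n : ℕ} (Gg : Subgroup (GL (Fin n) ℂ)) :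
    Ideal (MvPolynomial (Fin n) ℂ) :=
  Ideal.span {f | (∀ g ∈ Gg, actGL g f = f) ∧ constantCoeff f = 0}

/-- The maximal ideal `m_S = ⟨X₁,…,Xₙ⟩` at the origin. -/
noncomputable def maxIdeal (n : ℕ) : Ideal (MvPolynomial (Fin n) ℂ) :=
  Ideal.span (Set.range (X : Fin n → MvPolynomial (Fin n) ℂ))

/-!
A polynomial `f` without constant term is a root of the monic polynomial `∏ (T - g • f)`,
whose non-leading coefficients are invariant with zero constant term; hence `m_S ⊆ √n_𝔊`, and
some power of `m_S` lies in `n_𝔊`. This gives a Nakayama lemma: `I ⊆ J + m_S·I` implies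
`I ⊆ J + n_𝔊`. Since `S = ℂ + m_S`, the ideal `I = W·S + n_𝔊` is the ℂ-span of `W` and
`m_S·I + n_𝔊`, which is surjectivity. For injectivity, Maschke's theorem gives a `𝔊`-stable
`W' ⊆ W` complementary to `W ∩ (m_S·I + n_𝔊)`; then `W ⊆ W' + m_S·I + n_𝔊`, so
`I = W'·S + n_𝔊` by Nakayama, and minimality forces `W' = W`.
-/

theorem exists_le_disjoint_le_sup {α : Type*} [Lattice α] [BoundedOrder α] [IsModularLattice α]
    [ComplementedLattice α] (a b : α) : ∃ c ≤ a, Disjoint c b ∧ a ≤ c ⊔ b := by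
  obtain ⟨c, hdisj, hsup⟩ :=
    IsModularLattice.exists_disjoint_and_sup_eq (inf_le_left : a ⊓ b ≤ a)
  have hca : c ≤ a := hsup ▸ le_sup_right
  refine ⟨c, hca, ?_, hsup ▸ sup_le (inf_le_right.trans le_sup_right) le_sup_left⟩
  rw [disjoint_iff, ← inf_eq_left.2 hca, inf_assoc]
  exact hdisj.symm.eq_bot

instance Subrepresentation.instIsModularLattice {k G V : Type*} [Ring k] [Monoid G]
    [AddCommGroup V] [Module k V] {ρ : Representation k G V} :
    IsModularLattice (Subrepresentation ρ) where
  sup_inf_le_assoc_of_le _ := IsModularLattice.sup_inf_le_assoc_of_le (α := Submodule k V) _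

theorem Ideal.le_sup_of_le_sup_mul {R : Type*} [CommSemiring R] {m N I J : Ideal R} {k : ℕ}
    (hk : m ^ k ≤ N) (h : I ≤ J ⊔ m * I) : I ≤ J ⊔ N := by
  have key : ∀ k : ℕ, I ≤ J ⊔ m ^ k * I := by
    intro k
    induction k with
    | zero => simp
    | succ k ih =>
      have hmul : m ^ k * I ≤ J ⊔ m ^ (k + 1) * I :=
        calc m ^ k * I ≤ m ^ k * (J ⊔ m * I) := Ideal.mul_mono_right h
          _ = m ^ k * J ⊔ m ^ (k + 1) * I := by rw [mul_sup, ← mul_assoc, ← pow_succ]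
          _ ≤ J ⊔ m ^ (k + 1) * I := sup_le_sup_right Ideal.mul_le_right _
      exact ih.trans (sup_le le_sup_left hmul)
  exact (key k).trans (sup_le_sup_left (Ideal.mul_le_left.trans hk) J)

theorem Ideal.span_le_comap_span {R F : Type*} [Semiring R] [FunLike F R R] [RingHomClass F R R]
    {f : F} {s : Set R} (h : Set.MapsTo f s s) : Ideal.span s ≤ (Ideal.span s).comap f :=
  Ideal.span_le.2 fun _ hx => Ideal.subset_span (h hx)

section

variable {n : ℕ}

theorem actGL_X (g : GL (Fin n) ℂ) (i : Fin n) :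
    actGL g (X i) = ∑ j, ((g⁻¹ : GL (Fin n) ℂ) : Matrix (Fin n) (Fin n) ℂ) i j • X j :=
  aeval_X _ i

theorem actGL_one : actGL (1 : GL (Fin n) ℂ) = AlgHom.id ℂ _ := by
  ext i
  simp [actGL_X, Matrix.one_apply]

theorem actGL_mul (g h : GL (Fin n) ℂ) : actGL (g * h) = (actGL g).comp (actGL h) := by
  refine algHom_ext fun i => ?_
  simp only [AlgHom.comp_apply, actGL_X, map_sum, map_smul, mul_inv_rev, Units.val_mul,
    Matrix.mul_apply, Finset.sum_smul, Finset.smul_sum, smul_smul]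
  rw [Finset.sum_comm]

theorem constantCoeff_actGL (g : GL (Fin n) ℂ) (f : MvPolynomial (Fin n) ℂ) :
    constantCoeff (actGL g f) = constantCoeff f := by
  suffices (constantCoeff : MvPolynomial (Fin n) ℂ →+* ℂ).comp (actGL g) = constantCoeff from
    RingHom.congr_fun this f
  refine ringHom_ext (fun c => by simp) fun i => by simp [actGL_X]

noncomputable instance : MulSemiringAction (GL (Fin n) ℂ) (MvPolynomial (Fin n) ℂ) where
  smul g f := actGL g f
  one_smul f := congrArg (· f) (congrArg DFunLike.coe actGL_one)
  mul_smul g h f := congrArg (· f) (congrArg DFunLike.coe (actGL_mul g h))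
  smul_zero g := map_zero (actGL g)
  smul_add g := map_add (actGL g)
  smul_one g := map_one (actGL g)
  smul_mul g := map_mul (actGL g)

theorem smul_eq_actGL (g : GL (Fin n) ℂ) (f : MvPolynomial (Fin n) ℂ) : g • f = actGL g f := rfl

instance : SMulCommClass (GL (Fin n) ℂ) ℂ (MvPolynomial (Fin n) ℂ) :=
  ⟨fun g c f => map_smul (actGL g) c f⟩

theorem maxIdeal_eq_ker : maxIdeal n = RingHom.ker constantCoeff := by
  ext f
  rw [maxIdeal, ← Set.image_univ (f := (X : Fin n → MvPolynomial (Fin n) ℂ)),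
    mem_ideal_span_X_image, RingHom.mem_ker, constantCoeff_eq, ← notMem_support_iff]
  simp only [Set.mem_univ, true_and]
  refine ⟨fun h h0 => ?_, fun h s hs => ?_⟩
  · simpa using h 0 h0
  · by_contra! hs0
    obtain rfl : s = 0 := Finsupp.ext hs0
    exact h hs

variable {Gg : Subgroup (GL (Fin n) ℂ)}

theorem map_constantCoeff_prodXSubSMul [Fintype Gg] {f : MvPolynomial (Fin n) ℂ}
    (hf : constantCoeff f = 0) :
    (prodXSubSMul Gg _ f).map constantCoeff = Polynomial.X ^ (prodXSubSMul Gg _ f).natDegree := by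
  obtain ⟨c, hc⟩ : ∃ c, (prodXSubSMul Gg _ f).map constantCoeff = Polynomial.X ^ c := by
    rw [prodXSubSMul, Polynomial.map_prod]
    refine ⟨_, Finset.prod_eq_pow_card fun q _ => ?_⟩
    induction q using QuotientGroup.induction_on with
    | H g =>
      rw [MulAction.ofQuotientStabilizer_mk, Polynomial.map_sub, Polynomial.map_X,
        Polynomial.map_C, Subgroup.smul_def, smul_eq_actGL, constantCoeff_actGL, hf, map_zero,
        sub_zero]
  rw [← (prodXSubSMul.monic Gg _ f).natDegree_map constantCoeff, hc, Polynomial.natDegree_X_pow]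

theorem pow_natDegree_prodXSubSMul_mem_invIdeal [Fintype Gg] {f : MvPolynomial (Fin n) ℂ}
    (hf : constantCoeff f = 0) :
    f ^ (prodXSubSMul Gg _ f).natDegree ∈ invIdeal Gg := by
  set P := prodXSubSMul Gg (MvPolynomial (Fin n) ℂ) f
  set Q := Polynomial.X ^ P.natDegree - P
  have hQ_eval : Q.eval f = f ^ P.natDegree := by simp [Q, P, prodXSubSMul.eval]
  have hQ_smul (g : Gg) : g • Q = Q := by simp [Q, P, smul_sub, prodXSubSMul.smul]
  have hQ_map : Q.map constantCoeff = 0 := by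
    simp [Q, P, Polynomial.map_sub, map_constantCoeff_prodXSubSMul hf]
  rw [← hQ_eval, Polynomial.eval_eq_sum_range]
  refine sum_mem fun j _ => Ideal.mul_mem_right _ _ (Ideal.subset_span ⟨fun g hg => ?_, ?_⟩)
  · exact (Polynomial.coeff_smul (⟨g, hg⟩ : Gg) Q j).symm.trans
      (congrArg (·.coeff j) (hQ_smul _))
  · simpa using congrArg (·.coeff j) hQ_map

theorem maxIdeal_le_radical_invIdeal [Fintype Gg] : maxIdeal n ≤ (invIdeal Gg).radical := by
  intro f hf
  rw [maxIdeal_eq_ker, RingHom.mem_ker] at hf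
  exact ⟨_, pow_natDegree_prodXSubSMul_mem_invIdeal hf⟩

theorem exists_maxIdeal_pow_le_invIdeal [Fintype Gg] : ∃ k, maxIdeal n ^ k ≤ invIdeal Gg :=
  Ideal.exists_pow_le_of_le_radical_of_fg maxIdeal_le_radical_invIdeal
    (Submodule.fg_span (Set.finite_range _))

theorem maxIdeal_le_comap_actGL (g : GL (Fin n) ℂ) : maxIdeal n ≤ (maxIdeal n).comap (actGL g) :=
  fun f hf => by
    rw [maxIdeal_eq_ker, RingHom.mem_ker] at hf
    rwa [maxIdeal_eq_ker, Ideal.mem_comap, RingHom.mem_ker, constantCoeff_actGL]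

theorem invIdeal_le_comap_actGL {g : GL (Fin n) ℂ} (hg : g ∈ Gg) :
    invIdeal Gg ≤ (invIdeal Gg).comap (actGL g) :=
  Ideal.span_le_comap_span fun f hf => by rwa [Set.mem_ofPred_eq, hf.1 g hg]

theorem maxIdeal_mul_sup_invIdeal_le_comap_actGL {g : GL (Fin n) ℂ} (hg : g ∈ Gg)
    {I : Ideal (MvPolynomial (Fin n) ℂ)} {W : Submodule ℂ (MvPolynomial (Fin n) ℂ)}
    (hW : ∀ f ∈ W, actGL g f ∈ W) (hgen : Ideal.span (W : Set _) ⊔ invIdeal Gg = I) :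
    maxIdeal n * I ⊔ invIdeal Gg ≤ (maxIdeal n * I ⊔ invIdeal Gg).comap (actGL g) := by
  have hI : I ≤ I.comap (actGL g) :=
    hgen ▸ (sup_le_sup (Ideal.span_le_comap_span hW) (invIdeal_le_comap_actGL hg)).trans
      (Ideal.le_comap_sup _)
  exact (sup_le_sup ((Ideal.mul_mono (maxIdeal_le_comap_actGL g) hI).trans (Ideal.le_comap_mul _))
    (invIdeal_le_comap_actGL hg)).trans (Ideal.le_comap_sup _)

theorem restrictScalars_span_le_sup_maxIdeal_mul (W : Submodule ℂ (MvPolynomial (Fin n) ℂ)) :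
    (Ideal.span (W : Set _)).restrictScalars ℂ ≤
      W ⊔ (maxIdeal n * Ideal.span (W : Set _)).restrictScalars ℂ := by
  intro f hf
  induction hf using Submodule.span_induction with
  | mem w hw => exact Submodule.mem_sup_left hw
  | zero => exact zero_mem _
  | add f f' _ _ hf hf' => exact add_mem hf hf'
  | smul s f hf ih =>
    have hs : s - C (constantCoeff s) ∈ maxIdeal n := by simp [maxIdeal_eq_ker]
    rw [smul_eq_mul, ← sub_add_cancel s (C (constantCoeff s)), add_mul, C_mul']
    exact add_mem (Submodule.mem_sup_right (Ideal.mul_mem_mul hs hf))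
      (Submodule.smul_mem _ _ ih)

theorem restrictScalars_le_sup_of_span_sup_eq {I : Ideal (MvPolynomial (Fin n) ℂ)}
    {W : Submodule ℂ (MvPolynomial (Fin n) ℂ)}
    (hgen : Ideal.span (W : Set _) ⊔ invIdeal Gg = I) :
    I.restrictScalars ℂ ≤ W ⊔ (maxIdeal n * I ⊔ invIdeal Gg).restrictScalars ℂ := by
  intro f hf
  rw [← hgen] at hf
  obtain ⟨a, ha, b, hb, rfl⟩ := Submodule.mem_sup.1 hf
  have hspan : maxIdeal n * Ideal.span (W : Set _) ≤ maxIdeal n * I ⊔ invIdeal Gg :=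
    (Ideal.mul_mono_right (hgen ▸ le_sup_left)).trans le_sup_left
  exact add_mem (sup_le_sup_left (fun _ hx => hspan hx) W
    (restrictScalars_span_le_sup_maxIdeal_mul W ha))
    (Submodule.mem_sup_right (Ideal.mem_sup_right hb))

theorem span_sup_invIdeal_eq_of_le_sup [Fintype Gg] {I : Ideal (MvPolynomial (Fin n) ℂ)}
    {W W' : Submodule ℂ (MvPolynomial (Fin n) ℂ)}
    (hgen : Ideal.span (W : Set _) ⊔ invIdeal Gg = I) (hW' : W' ≤ W)
    (hle : W ≤ W' ⊔ (maxIdeal n * I ⊔ invIdeal Gg).restrictScalars ℂ) :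
    Ideal.span (W' : Set _) ⊔ invIdeal Gg = I := by
  refine le_antisymm (hgen ▸ sup_le_sup_right (Ideal.span_mono hW') _) ?_
  have hK : maxIdeal n * I ⊔ invIdeal Gg ≤
      (Ideal.span (W' : Set _) ⊔ invIdeal Gg) ⊔ maxIdeal n * I :=
    sup_le le_sup_right (le_sup_right.trans le_sup_left)
  have hspan :
      Ideal.span (W : Set _) ≤ (Ideal.span (W' : Set _) ⊔ invIdeal Gg) ⊔ maxIdeal n * I := by
    refine Ideal.span_le.2 fun w hw => ?_
    obtain ⟨a, ha, b, hb, rfl⟩ := Submodule.mem_sup.1 (hle hw)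
    exact add_mem (Ideal.mem_sup_left (Ideal.mem_sup_left (Ideal.subset_span ha))) (hK hb)
  have hI : I ≤ (Ideal.span (W' : Set _) ⊔ invIdeal Gg) ⊔ maxIdeal n * I := by
    conv_lhs => rw [← hgen]
    exact sup_le hspan (le_sup_right.trans le_sup_left)
  obtain ⟨k, hk⟩ := exists_maxIdeal_pow_le_invIdeal (Gg := Gg)
  simpa only [sup_assoc, sup_idem] using Ideal.le_sup_of_le_sup_mul hk hI

theorem disjoint_restrictScalars_of_minimal [Fintype Gg] {I : Ideal (MvPolynomial (Fin n) ℂ)}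
    {W : Submodule ℂ (MvPolynomial (Fin n) ℂ)} (hWstab : ∀ g ∈ Gg, ∀ f ∈ W, actGL g f ∈ W)
    (hgen : Ideal.span (W : Set _) ⊔ invIdeal Gg = I)
    (hmin : ∀ W' : Submodule ℂ (MvPolynomial (Fin n) ℂ), W' < W →
      (∀ g ∈ Gg, ∀ f ∈ W', actGL g f ∈ W') → Ideal.span (W' : Set _) ⊔ invIdeal Gg ≠ I) :
    Disjoint W ((maxIdeal n * I ⊔ invIdeal Gg).restrictScalars ℂ) := by
  let ρ := Representation.ofDistribMulAction ℂ Gg (MvPolynomial (Fin n) ℂ)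
  let Wρ : Subrepresentation ρ := ⟨W, fun g _ hf => hWstab g g.2 _ hf⟩
  let Kρ : Subrepresentation ρ := ⟨(maxIdeal n * I ⊔ invIdeal Gg).restrictScalars ℂ,
    fun g _ hf => maxIdeal_mul_sup_invIdeal_le_comap_actGL g.2 (hWstab g g.2) hgen hf⟩
  -- `Subrepresentation ρ` is a complemented lattice by Maschke's theorem.
  obtain ⟨W', hW'W, hdisj, hle⟩ := exists_le_disjoint_le_sup Wρ Kρ
  obtain rfl : W'.toSubmodule = W := by
    by_contra hne
    exact hmin _ (lt_of_le_of_ne hW'W hne) (fun g hg f hf => W'.apply_mem_toSubmodule ⟨g, hg⟩ hf)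
      (span_sup_invIdeal_eq_of_le_sup hgen hW'W hle)
  exact disjoint_iff.2 (congrArg Subrepresentation.toSubmodule (disjoint_iff.1 hdisj))

end

theorem stmt7_general {n : ℕ} (Gg : Subgroup (GL (Fin n) ℂ)) [Fintype Gg]
    (I : Ideal (MvPolynomial (Fin n) ℂ))
    (W : Submodule ℂ (MvPolynomial (Fin n) ℂ))
    (hWstab : ∀ g ∈ Gg, ∀ f ∈ W, actGL g f ∈ W)
    (hgen : Ideal.span (W : Set (MvPolynomial (Fin n) ℂ)) + invIdeal Gg = I)
    (hmin : ∀ W' : Submodule ℂ (MvPolynomial (Fin n) ℂ), W' < W →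
      (∀ g ∈ Gg, ∀ f ∈ W', actGL g f ∈ W') →
      Ideal.span (W' : Set (MvPolynomial (Fin n) ℂ)) + invIdeal Gg ≠ I) :
    (∀ g ∈ Gg, ∀ v ∈ (maxIdeal n * I + invIdeal Gg : Ideal (MvPolynomial (Fin n) ℂ)),
        actGL g v ∈ (maxIdeal n * I + invIdeal Gg : Ideal (MvPolynomial (Fin n) ℂ))) ∧
    Function.Injective
      ((Submodule.restrictScalars ℂ (maxIdeal n * I + invIdeal Gg)).mkQ.comp W.subtype) ∧
    LinearMap.range
        ((Submodule.restrictScalars ℂ (maxIdeal n * I + invIdeal Gg)).mkQ.comp W.subtype) =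
      Submodule.map (Submodule.restrictScalars ℂ (maxIdeal n * I + invIdeal Gg)).mkQ
        (Submodule.restrictScalars ℂ I) := by
  simp only [Submodule.add_eq_sup] at hgen hmin ⊢
  have hWI : W ≤ I.restrictScalars ℂ := fun f hf =>
    hgen ▸ Ideal.mem_sup_left (Ideal.subset_span hf)
  refine ⟨fun g hg v hv =>
    maxIdeal_mul_sup_invIdeal_le_comap_actGL hg (hWstab g hg) hgen hv, ?_, ?_⟩
  · rw [← LinearMap.ker_eq_bot, LinearMap.ker_comp, Submodule.ker_mkQ,
      ← Submodule.disjoint_iff_comap_eq_bot]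
    exact disjoint_restrictScalars_of_minimal hWstab hgen hmin
  · rw [LinearMap.range_comp, Submodule.range_subtype]
    refine le_antisymm (Submodule.map_mono hWI) ?_
    calc _ ≤ Submodule.map _ (W ⊔ _) :=
          Submodule.map_mono (restrictScalars_le_sup_of_span_sup_eq hgen)
      _ = _ := by rw [Submodule.map_sup, Submodule.mkQ_map_self, sup_bot_eq]

/-- Let `n_𝔊 ⊆ I ⊆ m_S` and let `W` be a finite-dimensional `𝔊`-stable subspace with
`I = W·S + n_𝔊`, minimal with this property.  Then `m_S·I + n_𝔊` is `𝔊`-stable and the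
ℂ-linear map `W → I/(m_S·I + n_𝔊)` (inclusion followed by the quotient map) is a
`𝔊`-equivariant isomorphism: it is injective with image exactly `I/(m_S·I + n_𝔊)`. -/
theorem stmt7 {n : ℕ} (Gg : Subgroup (GL (Fin n) ℂ)) [Fintype Gg]
    (I : Ideal (MvPolynomial (Fin n) ℂ))
    (hnI : invIdeal Gg ≤ I) (hIm : I ≤ maxIdeal n)
    (W : Submodule ℂ (MvPolynomial (Fin n) ℂ)) [FiniteDimensional ℂ W]
    (hWstab : ∀ g ∈ Gg, ∀ f ∈ W, actGL g f ∈ W)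
    (hgen : Ideal.span (W : Set (MvPolynomial (Fin n) ℂ)) + invIdeal Gg = I)
    (hmin : ∀ W' : Submodule ℂ (MvPolynomial (Fin n) ℂ), W' < W →
      (∀ g ∈ Gg, ∀ f ∈ W', actGL g f ∈ W') →
      Ideal.span (W' : Set (MvPolynomial (Fin n) ℂ)) + invIdeal Gg ≠ I) :
    (∀ g ∈ Gg, ∀ v ∈ (maxIdeal n * I + invIdeal Gg : Ideal (MvPolynomial (Fin n) ℂ)),
        actGL g v ∈ (maxIdeal n * I + invIdeal Gg : Ideal (MvPolynomial (Fin n) ℂ))) ∧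
    Function.Injective
      ((Submodule.restrictScalars ℂ (maxIdeal n * I + invIdeal Gg)).mkQ.comp W.subtype) ∧
    LinearMap.range
        ((Submodule.restrictScalars ℂ (maxIdeal n * I + invIdeal Gg)).mkQ.comp W.subtype) =
      Submodule.map (Submodule.restrictScalars ℂ (maxIdeal n * I + invIdeal Gg)).mkQ
        (Submodule.restrictScalars ℂ I) :=
  stmt7_general Gg I W hWstab hgen hmin
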